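/- Let f(z) = Σ_{i≥0} f_i z^i be a power series with radius of convergence strictly greater than π and let k be a positive integer. There is a constant K > 0 (depending only on f and k) with the following property: if Q is a polynomial series and M ≥ 0 satisfy Q_n = 0 for n < k and ‖Q_n‖_n ≤ M·(n−k)!·π^{−n} for all n ≥ k, then the polynomial series f(dD)Q satisfies (f(dD)Q)_n = 0 for n < k and ‖(f(dD)Q)_n‖_n ≤ M·K·(n−k)!·π^{−n} for all n ≥ k. -/

import Mathlib

open Polynomial Classical

/-- The operator `D` on polynomials: `(Dp)(u) = (1 - u²)·p′(u)`. -/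
noncomputable def Dop (p : Polynomial ℂ) : Polynomial ℂ := (1 - X ^ 2) * derivative p

/-- The polynomials τ_n: τ₀ = 1, τ₁ = X, τ_{n+1} = (1/n)·D τ_n for n ≥ 1. -/
noncomputable def tau : ℕ → Polynomial ℂ
  | 0 => 1
  | 1 => X
  | n + 2 => (((n + 1 : ℕ) : ℂ))⁻¹ • Dop (tau (n + 1))

/-- The norm `‖p‖_n` of a polynomial `p ∈ P_n`: writing `p = Σ_{k=0}^n a_k τ_k`
(the `τ_k` form a basis of `P_n`, so the `a_k` are unique), set
`‖p‖_n = Σ_{k=0}^n |a_k|·(π/2)^{n-k}`. -/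
noncomputable def tauNorm (n : ℕ) (p : Polynomial ℂ) : ℝ :=
  if h : ∃ a : ℕ → ℂ, p = ∑ k ∈ Finset.range (n + 1), a k • tau k then
    ∑ k ∈ Finset.range (n + 1), ‖h.choose k‖ * (Real.pi / 2) ^ (n - k)
  else 0

/-- The operator `f(dD)` on polynomial series: `(f(dD)Q)_n = Σ_{i=0}^n f_i · D^i Q_{n-i}`. -/
noncomputable def fdD (f : ℕ → ℂ) (Q : ℕ → Polynomial ℂ) (n : ℕ) : Polynomial ℂ :=
  ∑ i ∈ Finset.range (n + 1), f i • Dop^[i] (Q (n - i))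

/-!
Since `D τ_m = m τ_{m+1}`, the operator `Dⁱ` sends `τ_m` to `m(m+1)⋯(m+i-1) τ_{m+i}`; as the weight
of `τ_j` in `‖·‖_n` depends only on `n - j`, `Dⁱ : P_m → P_{m+i}` has norm at most the rising
factorial `m^{(i)}`. For `m ≥ k ≥ 1` one has `m^{(i)} (m-k)! ≤ (i+1)^{k-1} (m+i-k)!`, so the term
`f_i Dⁱ Q_{n-i}` of `(f(dD)Q)_n` has norm at most `M (n-k)! π^{-n} · |f_i| π^i (i+1)^{k-1}`. These
weights are summable because the radius of convergence of `f` exceeds `π`; their sum plus one is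
`K`.
-/

open Finset Nat

lemma natDegree_one_sub_X_sq : (1 - X ^ 2 : ℂ[X]).natDegree = 2 := by
  rw [← neg_sub, natDegree_neg, ← C_1, natDegree_X_pow_sub_C]

lemma natDegree_Dop {p : ℂ[X]} (hp : p.natDegree ≠ 0) : (Dop p).natDegree = p.natDegree + 1 := by
  have h1 : (1 - X ^ 2 : ℂ[X]) ≠ 0 := ne_zero_of_natDegree_gt (n := 0) (by
    rw [natDegree_one_sub_X_sq]; norm_num)
  rw [Dop, natDegree_mul h1 (derivative_ne_zero.2 hp), natDegree_one_sub_X_sq,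
    natDegree_derivative]
  omega

lemma natDegree_Dop_le (p : ℂ[X]) : (Dop p).natDegree ≤ p.natDegree + 1 := by
  by_cases hp : p.natDegree = 0
  · simp [Dop, derivative_eq_zero.2 hp]
  · exact (natDegree_Dop hp).le

lemma natDegree_tau (n : ℕ) : (tau n).natDegree = n := by
  induction n with
  | zero => simp [tau]
  | succ n ih =>
    cases n with
    | zero => simp [tau]
    | succ n =>
      rw [tau, natDegree_smul _ (inv_ne_zero (by exact_mod_cast n.succ_ne_zero)),
        natDegree_Dop (by omega), ih]

lemma degree_tau (n : ℕ) : (tau n).degree = n := by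
  rcases n with _ | n
  · simp [tau]
  · exact degree_eq_iff_natDegree_eq_of_pos n.succ_pos |>.2 (natDegree_tau _)

lemma Dop_tau (m : ℕ) : Dop (tau m) = (m : ℂ) • tau (m + 1) := by
  rcases m with _ | m
  · simp [tau, Dop]
  · rw [tau, smul_smul, mul_inv_cancel₀ (by exact_mod_cast m.succ_ne_zero), one_smul]

noncomputable def DopLinear : ℂ[X] →ₗ[ℂ] ℂ[X] := LinearMap.mulLeft ℂ (1 - X ^ 2) ∘ₗ derivative

lemma Dop_smul (c : ℂ) (p : ℂ[X]) : Dop (c • p) = c • Dop p := DopLinear.map_smul c p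

lemma iterate_Dop (i : ℕ) : Dop^[i] = ⇑(DopLinear ^ i) := by
  rw [Module.End.coe_pow]; rfl

lemma iterate_Dop_zero (i : ℕ) : Dop^[i] 0 = 0 :=
  Function.iterate_fixed (by simp [Dop]) i

lemma degree_iterate_Dop_le {p : ℂ[X]} {m : ℕ} (hp : p.degree ≤ m) (i : ℕ) :
    (Dop^[i] p).degree ≤ ↑(m + i) := by
  rw [← natDegree_le_iff_degree_le] at hp ⊢
  induction i with
  | zero => simpa
  | succ i ih =>
    rw [Function.iterate_succ_apply']
    exact (natDegree_Dop_le _).trans (by omega)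

lemma iterate_Dop_tau (i m : ℕ) : Dop^[i] (tau m) = (m.ascFactorial i : ℂ) • tau (m + i) := by
  induction i with
  | zero => simp
  | succ i ih =>
    rw [Function.iterate_succ_apply', ih, Dop_smul, Dop_tau, smul_smul, ascFactorial_succ]
    push_cast
    ring_nf

noncomputable def tauSequence : Polynomial.Sequence ℂ := ⟨tau, degree_tau⟩

lemma isUnit_leadingCoeff_tauSequence (i : ℕ) : IsUnit (tauSequence i).leadingCoeff :=
  (leadingCoeff_ne_zero.2 (tauSequence.ne_zero i)).isUnit

noncomputable def tauBasis : Module.Basis ℕ ℂ ℂ[X] :=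
  tauSequence.basis isUnit_leadingCoeff_tauSequence

lemma tauBasis_apply (k : ℕ) : tauBasis k = tau k := Sequence.basis_eq_self _ _ _

lemma tauBasis_repr_support_subset {n : ℕ} {p : ℂ[X]} (hp : p.degree ≤ n) :
    ↑(tauBasis.repr p).support ⊆ Set.Iic n := by
  have h : ⇑tauBasis = tauSequence := funext tauBasis_apply
  rw [← Module.Basis.mem_span_image, h,
    tauSequence.span_degreeLE fun i _ => isUnit_leadingCoeff_tauSequence i]
  exact mem_degreeLE.2 hp

lemma sum_tauBasis_repr_smul_tau {n : ℕ} {p : ℂ[X]} (hp : p.degree ≤ n) :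
    ∑ k ∈ range (n + 1), tauBasis.repr p k • tau k = p := by
  have hsupp : (tauBasis.repr p).support ⊆ range (n + 1) := fun k hk => by
    simpa [Nat.lt_succ_iff] using tauBasis_repr_support_subset hp hk
  conv_rhs => rw [← tauBasis.linearCombination_repr p, Finsupp.linearCombination_apply,
    Finsupp.sum_of_support_subset _ hsupp (fun k a => a • tauBasis k) fun _ _ => zero_smul ℂ _]
  simp only [tauBasis_apply]

lemma tauBasis_repr_sum_smul_tau (s : Finset ℕ) (a : ℕ → ℂ) (k : ℕ) :
    tauBasis.repr (∑ j ∈ s, a j • tau j) k = if k ∈ s then a k else 0 := by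
  simp [← tauBasis_apply, Finsupp.single_apply]

lemma tauNorm_eq_sum {n : ℕ} {p : ℂ[X]} (hp : p.degree ≤ n) :
    tauNorm n p = ∑ k ∈ range (n + 1), ‖tauBasis.repr p k‖ * (Real.pi / 2) ^ (n - k) := by
  have h : ∃ a : ℕ → ℂ, p = ∑ k ∈ range (n + 1), a k • tau k :=
    ⟨_, (sum_tauBasis_repr_smul_tau hp).symm⟩
  rw [tauNorm, dif_pos h]
  refine sum_congr rfl fun k hk => ?_
  have hrepr := congrArg (tauBasis.repr · k) h.choose_spec
  simp only [tauBasis_repr_sum_smul_tau, if_pos hk] at hrepr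
  rw [hrepr]

lemma tauNorm_zero (n : ℕ) : tauNorm n 0 = 0 := by
  simp [tauNorm_eq_sum (n := n) (p := 0) (by simp)]

lemma tauNorm_tau {n k : ℕ} (hk : k ≤ n) : tauNorm n (tau k) = (Real.pi / 2) ^ (n - k) := by
  rw [tauNorm_eq_sum ((degree_tau k).trans_le (by exact_mod_cast hk)), ← tauBasis_apply,
    Module.Basis.repr_self]
  simp [Finsupp.single_apply, apply_ite, ite_mul, Nat.lt_succ_iff.2 hk]

lemma tauNorm_smul {n : ℕ} (c : ℂ) {p : ℂ[X]} (hp : p.degree ≤ n) :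
    tauNorm n (c • p) = ‖c‖ * tauNorm n p := by
  rw [tauNorm_eq_sum ((degree_smul_le c p).trans hp), tauNorm_eq_sum hp, mul_sum]
  simp [mul_assoc]

lemma tauNorm_sum_le {ι : Type*} {n : ℕ} (s : Finset ι) (p : ι → ℂ[X])
    (hp : ∀ j ∈ s, (p j).degree ≤ n) :
    tauNorm n (∑ j ∈ s, p j) ≤ ∑ j ∈ s, tauNorm n (p j) := by
  have hsum : (∑ j ∈ s, p j).degree ≤ n :=
    mem_degreeLE.1 <| Submodule.sum_mem _ fun j hj => mem_degreeLE.2 (hp j hj)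
  rw [tauNorm_eq_sum hsum, sum_congr rfl fun j hj => tauNorm_eq_sum (hp j hj), sum_comm]
  gcongr with k
  rw [map_sum, Finsupp.finsetSum_apply, ← sum_mul]
  gcongr
  exact norm_sum_le _ _

lemma tauNorm_iterate_Dop_le {m : ℕ} {p : ℂ[X]} (hp : p.degree ≤ m) (i : ℕ) :
    tauNorm (m + i) (Dop^[i] p) ≤ m.ascFactorial i * tauNorm m p := by
  have hdeg : ∀ j ∈ range (m + 1), (tauBasis.repr p j • Dop^[i] (tau j)).degree ≤ ↑(m + i) :=
    fun j hj => (degree_smul_le _ _).trans <| degree_iterate_Dop_le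
      ((degree_tau j).trans_le (by exact_mod_cast Nat.lt_succ_iff.1 (mem_range.1 hj))) i
  calc tauNorm (m + i) (Dop^[i] p)
      = tauNorm (m + i) (∑ j ∈ range (m + 1), tauBasis.repr p j • Dop^[i] (tau j)) := by
        conv_lhs => rw [← sum_tauBasis_repr_smul_tau hp, iterate_Dop, map_sum]
        simp only [map_smul, ← iterate_Dop]
    _ ≤ ∑ j ∈ range (m + 1), tauNorm (m + i) (tauBasis.repr p j • Dop^[i] (tau j)) :=
        tauNorm_sum_le _ _ hdeg
    _ = ∑ j ∈ range (m + 1),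
          ‖tauBasis.repr p j‖ * (j.ascFactorial i * (Real.pi / 2) ^ (m - j)) := by
        refine sum_congr rfl fun j hj => ?_
        have hj : j ≤ m := Nat.lt_succ_iff.1 (mem_range.1 hj)
        have hji : (tau (j + i)).degree ≤ ↑(m + i) :=
          (degree_tau _).trans_le (by exact_mod_cast (by omega : j + i ≤ m + i))
        rw [iterate_Dop_tau, ← smul_assoc, tauNorm_smul _ hji, tauNorm_tau (by omega),
          show m + i - (j + i) = m - j by omega, smul_eq_mul, norm_mul, Complex.norm_natCast]
        ring
    _ ≤ ∑ j ∈ range (m + 1),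
          ‖tauBasis.repr p j‖ * (m.ascFactorial i * (Real.pi / 2) ^ (m - j)) := by
        gcongr with j hj
        exact Nat.lt_succ_iff.1 (mem_range.1 hj)
    _ = m.ascFactorial i * tauNorm m p := by
        rw [tauNorm_eq_sum hp, mul_sum]
        exact sum_congr rfl fun j _ => by ring

lemma ascFactorial_mul_factorial_le (s t i : ℕ) :
    (s + 1 + t).ascFactorial i * t ! ≤ (i + 1) ^ s * (t + i)! := by
  induction s generalizing t with
  | zero => rw [zero_add, add_comm 1 t, mul_comm, factorial_mul_ascFactorial, pow_zero, one_mul]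
  | succ s ih =>
    have h := ih (t + 1)
    rw [show s + 1 + (t + 1) = s + 1 + 1 + t by omega, factorial_succ,
      show t + 1 + i = t + i + 1 by omega, factorial_succ] at h
    have hti : t + i + 1 ≤ (i + 1) * (t + 1) := by nlinarith
    refine Nat.le_of_mul_le_mul_left ?_ t.succ_pos
    calc (t + 1) * ((s + 1 + 1 + t).ascFactorial i * t !)
        = (s + 1 + 1 + t).ascFactorial i * ((t + 1) * t !) := by ring
      _ ≤ (i + 1) ^ s * (t + i)! * (t + i + 1) := h.trans_eq (by ring)
      _ ≤ (i + 1) ^ s * (t + i)! * ((i + 1) * (t + 1)) := by gcongr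
      _ = (t + 1) * ((i + 1) ^ (s + 1) * (t + i)!) := by ring

lemma summable_norm_mul_pow_mul_succ_pow {E : Type*} [SeminormedAddCommGroup E] {f : ℕ → E}
    {ρ r C : ℝ} (hρ : 0 < ρ) (hρr : ρ < r) (hC : ∀ i, ‖f i‖ * r ^ i ≤ C) (s : ℕ) :
    Summable fun i => ‖f i‖ * ρ ^ i * ((i : ℝ) + 1) ^ s := by
  have hr : 0 < r := hρ.trans hρr
  have hq : 0 < ρ / r := div_pos hρ hr
  have hq1 : ‖ρ / r‖ < 1 := by
    rw [Real.norm_eq_abs, abs_of_pos hq]; exact (div_lt_one hr).2 hρr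
  have hgeom := (summable_nat_add_iff (f := fun n : ℕ => (n : ℝ) ^ s * (ρ / r) ^ n) 1).2
    (summable_pow_mul_geometric_of_norm_lt_one s hq1)
  refine Summable.of_nonneg_of_le (fun i => by positivity) (fun i => ?_)
    (hgeom.mul_left (C * r / ρ))
  calc ‖f i‖ * ρ ^ i * ((i : ℝ) + 1) ^ s = ‖f i‖ * r ^ i * (ρ / r) ^ i * ((i : ℝ) + 1) ^ s := by
        rw [div_pow]; field_simp
    _ ≤ C * (ρ / r) ^ i * ((i : ℝ) + 1) ^ s := by gcongr; exact hC i
    _ = C * r / ρ * (((i + 1 : ℕ) : ℝ) ^ s * (ρ / r) ^ (i + 1)) := by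
        push_cast; rw [pow_succ]; field_simp

section BoundedSeries

variable {Q : ℕ → ℂ[X]} {k : ℕ} {M : ℝ}

lemma tauNorm_iterate_Dop_le_of_le (hk : 1 ≤ k) (hM : 0 ≤ M)
    (hdeg : ∀ n : ℕ, (Q n).degree ≤ n) (hQ0 : ∀ n < k, Q n = 0)
    (hQ : ∀ n, k ≤ n → tauNorm n (Q n) ≤ M * (n - k)! / Real.pi ^ n) (m i : ℕ) :
    tauNorm (m + i) (Dop^[i] (Q m)) ≤ M * (i + 1) ^ (k - 1) * (m + i - k)! / Real.pi ^ m := by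
  rcases lt_or_ge m k with hm | hm
  · rw [hQ0 m hm, iterate_Dop_zero, tauNorm_zero]; positivity
  obtain ⟨s, rfl⟩ : ∃ s, k = s + 1 := ⟨k - 1, by omega⟩
  obtain ⟨t, rfl⟩ : ∃ t, m = s + 1 + t := ⟨m - (s + 1), by omega⟩
  have hQm := hQ _ hm
  have hcomb : ((s + 1 + t).ascFactorial i * t ! : ℝ) ≤ (i + 1) ^ s * (t + i)! := by
    exact_mod_cast ascFactorial_mul_factorial_le s t i
  simp only [show s + 1 + t - (s + 1) = t by omega, show s + 1 + t + i - (s + 1) = t + i by omega,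
    Nat.add_sub_cancel] at hQm ⊢
  calc tauNorm (s + 1 + t + i) (Dop^[i] (Q (s + 1 + t)))
      ≤ (s + 1 + t).ascFactorial i * tauNorm (s + 1 + t) (Q (s + 1 + t)) :=
        tauNorm_iterate_Dop_le (hdeg _) i
    _ ≤ (s + 1 + t).ascFactorial i * (M * t ! / Real.pi ^ (s + 1 + t)) := by gcongr
    _ = M * ((s + 1 + t).ascFactorial i * t !) / Real.pi ^ (s + 1 + t) := by ring
    _ ≤ M * ((i + 1) ^ s * (t + i)!) / Real.pi ^ (s + 1 + t) := by gcongr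
    _ = M * (i + 1) ^ s * (t + i)! / Real.pi ^ (s + 1 + t) := by ring

lemma tauNorm_fdD_le (f : ℕ → ℂ) (hk : 1 ≤ k) (hM : 0 ≤ M)
    (hdeg : ∀ n : ℕ, (Q n).degree ≤ n) (hQ0 : ∀ n < k, Q n = 0)
    (hQ : ∀ n, k ≤ n → tauNorm n (Q n) ≤ M * (n - k)! / Real.pi ^ n) (n : ℕ) :
    tauNorm n (fdD f Q n) ≤
      M * (n - k)! / Real.pi ^ n *
        ∑ i ∈ range (n + 1), ‖f i‖ * Real.pi ^ i * (i + 1) ^ (k - 1) := by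
  have hni : ∀ i ∈ range (n + 1), n - i + i = n := fun i hi =>
    Nat.sub_add_cancel (Nat.lt_succ_iff.1 (mem_range.1 hi))
  have hdegD : ∀ i ∈ range (n + 1), (Dop^[i] (Q (n - i))).degree ≤ n := fun i hi => by
    simpa [hni i hi] using degree_iterate_Dop_le (hdeg (n - i)) i
  calc tauNorm n (fdD f Q n) ≤ ∑ i ∈ range (n + 1), tauNorm n (f i • Dop^[i] (Q (n - i))) :=
        tauNorm_sum_le _ _ fun i hi => (degree_smul_le _ _).trans (hdegD i hi)
    _ = ∑ i ∈ range (n + 1), ‖f i‖ * tauNorm n (Dop^[i] (Q (n - i))) :=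
        sum_congr rfl fun i hi => tauNorm_smul _ (hdegD i hi)
    _ ≤ ∑ i ∈ range (n + 1),
          ‖f i‖ * (M * (i + 1) ^ (k - 1) * (n - k)! / Real.pi ^ (n - i)) := by
        gcongr with i hi
        simpa [hni i hi] using tauNorm_iterate_Dop_le_of_le hk hM hdeg hQ0 hQ (n - i) i
    _ = _ := by
        rw [mul_sum]
        refine sum_congr rfl fun i hi => ?_
        rw [← hni i hi, pow_add, Nat.add_sub_cancel]
        field_simp

end BoundedSeries

theorem stmt_6 (f : ℕ → ℂ)
    (hf : ∃ r : ℝ, Real.pi < r ∧ ∃ Cf : ℝ, ∀ i : ℕ, ‖f i‖ * r ^ i ≤ Cf)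
    (k : ℕ) (hk : 1 ≤ k) :
    ∃ K > (0 : ℝ), ∀ Q : ℕ → Polynomial ℂ, (∀ n : ℕ, (Q n).degree ≤ (n : WithBot ℕ)) →
      ∀ M : ℝ, 0 ≤ M → (∀ n : ℕ, n < k → Q n = 0) →
      (∀ n : ℕ, k ≤ n → tauNorm n (Q n) ≤ M * (Nat.factorial (n - k) : ℝ) / Real.pi ^ n) →
      (∀ n : ℕ, n < k → fdD f Q n = 0) ∧
      (∀ n : ℕ, k ≤ n →
        tauNorm n (fdD f Q n) ≤ M * K * (Nat.factorial (n - k) : ℝ) / Real.pi ^ n) := by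
  obtain ⟨r, hπr, Cf, hCf⟩ := hf
  have hS := summable_norm_mul_pow_mul_succ_pow Real.pi_pos hπr hCf (k - 1)
  set S := ∑' i, ‖f i‖ * Real.pi ^ i * ((i : ℝ) + 1) ^ (k - 1)
  have hS0 : 0 ≤ S := tsum_nonneg fun i => by positivity
  refine ⟨S + 1, by positivity, fun Q hdeg M hM hQ0 hQ => ⟨fun n hn => ?_, fun n _ => ?_⟩⟩
  · exact sum_eq_zero fun i _ => by rw [hQ0 (n - i) (by omega), iterate_Dop_zero, smul_zero]
  calc tauNorm n (fdD f Q n)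
      ≤ M * (n - k)! / Real.pi ^ n *
          ∑ i ∈ range (n + 1), ‖f i‖ * Real.pi ^ i * (i + 1) ^ (k - 1) :=
        tauNorm_fdD_le f hk hM hdeg hQ0 hQ n
    _ ≤ M * (n - k)! / Real.pi ^ n * (S + 1) := by
        gcongr
        exact (hS.sum_le_tsum _ fun i _ => by positivity).trans (le_add_of_nonneg_right zero_le_one)
    _ = M * (S + 1) * (n - k)! / Real.pi ^ n := by ring
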